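/- (Invariance of μ̂ for the jamming RTP generator.) For every f : [0,L] × {−2,0,+2} → ℝ with f(·,+2), f(·,−2) ∈ C¹([0,L]), f(·,0) continuous, ∂ₓf(L,+2) = 0 and ∂ₓf(0,−2) = 0, one has ∫ 𝓛̂ f dμ̂ = 0. -/
import Mathlib


open MeasureTheory Set

/-- A component measure `d⁰ δ₀ + a λ_{[0,L]} + d^L δ_L` of the invariant measure of the
jamming run-and-tumble process. -/
noncomputable def rtpComponent (d0 a dL L : ℝ) : Measure ℝ :=
  ENNReal.ofReal d0 • Measure.dirac 0 + ENNReal.ofReal a • volume.restrict (Icc 0 L) +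
    ENNReal.ofReal dL • Measure.dirac L

lemma integrable_dirac' (g : ℝ → ℝ) (a : ℝ) : Integrable g (Measure.dirac a) := by
  refine (integrable_const (g a)).congr ?_
  rw [MeasureTheory.ae_dirac_eq]
  exact Filter.eventually_pure.mpr rfl

lemma rtp_integrable {d0 a dL L : ℝ} (g : ℝ → ℝ)
    (hg : IntegrableOn g (Icc 0 L)) : Integrable g (rtpComponent d0 a dL L) := by
  unfold rtpComponent
  exact (((integrable_dirac' g 0).smul_measure ENNReal.ofReal_ne_top).add_measure
    (hg.smul_measure ENNReal.ofReal_ne_top)).add_measure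
    ((integrable_dirac' g L).smul_measure ENNReal.ofReal_ne_top)

lemma rtp_integral {d0 a dL L : ℝ} (hd0 : 0 ≤ d0) (ha : 0 ≤ a) (hdL : 0 ≤ dL) (g : ℝ → ℝ)
    (hg : IntegrableOn g (Icc 0 L)) :
    ∫ x, g x ∂(rtpComponent d0 a dL L) =
      d0 * g 0 + a * (∫ x in Icc 0 L, g x) + dL * g L := by
  unfold rtpComponent
  rw [integral_add_measure (((integrable_dirac' g 0).smul_measure ENNReal.ofReal_ne_top).add_measure
        (hg.smul_measure ENNReal.ofReal_ne_top))
      ((integrable_dirac' g L).smul_measure ENNReal.ofReal_ne_top),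
    integral_add_measure ((integrable_dirac' g 0).smul_measure ENNReal.ofReal_ne_top)
      (hg.smul_measure ENNReal.ofReal_ne_top),
    integral_smul_measure, integral_smul_measure, integral_smul_measure,
    integral_dirac, integral_dirac, ENNReal.toReal_ofReal hd0, ENNReal.toReal_ofReal ha,
    ENNReal.toReal_ofReal hdL, smul_eq_mul, smul_eq_mul, smul_eq_mul]

lemma ftc_icc {L : ℝ} (hL : 0 < L) (f f' : ℝ → ℝ)
    (hf : ∀ x ∈ Icc (0:ℝ) L, HasDerivWithinAt f (f' x) (Icc (0:ℝ) L) x)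
    (hf' : ContinuousOn f' (Icc (0:ℝ) L)) :
    ∫ x in Icc (0:ℝ) L, f' x = f L - f 0 := by
  have hcont : ContinuousOn f (Icc (0:ℝ) L) := fun x hx => (hf x hx).continuousWithinAt
  have h := intervalIntegral.integral_eq_sub_of_hasDeriv_right_of_le hL.le hcont
    (fun x hx => ((hf x ⟨hx.1.le, hx.2.le⟩).hasDerivAt
      (Icc_mem_nhds hx.1 hx.2)).hasDerivWithinAt)
    (hf'.intervalIntegrable_of_Icc hL.le)
  rwa [intervalIntegral.integral_of_le hL.le, ← integral_Icc_eq_integral_Ioc] at h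


/-- **Invariance of `μ̂` for the jamming RTP generator.** Let `μ̂` be the invariant measure of
the jamming RTP process on `[0,L] × {-2, 0, +2}` with parameter `ω`. For every function `f`
with `f(·,+2), f(·,-2) ∈ C¹([0,L])` (derivatives `f2', fm2'`), `f(·,0)` continuous,
`∂ₓf(L,+2) = 0` and `∂ₓf(0,-2) = 0`, the generator
`𝓛̂f(x,+2) = 2∂ₓf(x,+2) + 2ω(f(x,0) - f(x,+2))`,
`𝓛̂f(x,0) = ωf(x,+2) + ωf(x,-2) - 2ωf(x,0)`,
`𝓛̂f(x,-2) = -2∂ₓf(x,-2) + 2ω(f(x,0) - f(x,-2))`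
satisfies `∫ 𝓛̂f dμ̂ = 0`. -/
theorem stmt_9 (ω L : ℝ) (hω : 0 < ω) (hL : 0 < L)
    (μhat : Measure (ℝ × ℝ))
    (hμhat : μhat =
      Measure.map (fun x : ℝ => (x, (2:ℝ)))
          (rtpComponent 0 (ω / 4 / (2 + ω * L)) ((1/2) / (2 + ω * L)) L) +
        Measure.map (fun x : ℝ => (x, (0:ℝ)))
          (rtpComponent ((1/2) / (2 + ω * L)) (ω / 2 / (2 + ω * L)) ((1/2) / (2 + ω * L)) L) +
        Measure.map (fun x : ℝ => (x, (-2:ℝ)))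
          (rtpComponent ((1/2) / (2 + ω * L)) (ω / 4 / (2 + ω * L)) 0 L))
    (f2 f0 fm2 f2' fm2' : ℝ → ℝ)
    (hf2 : ∀ x ∈ Icc (0:ℝ) L, HasDerivWithinAt f2 (f2' x) (Icc (0:ℝ) L) x)
    (hf2' : ContinuousOn f2' (Icc (0:ℝ) L))
    (hfm2 : ∀ x ∈ Icc (0:ℝ) L, HasDerivWithinAt fm2 (fm2' x) (Icc (0:ℝ) L) x)
    (hfm2' : ContinuousOn fm2' (Icc (0:ℝ) L))
    (hf0 : ContinuousOn f0 (Icc (0:ℝ) L))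
    (hNeumannL : f2' L = 0) (hNeumann0 : fm2' 0 = 0)
    (F : ℝ × ℝ → ℝ)
    (hFp : ∀ x : ℝ, F (x, 2) = 2 * f2' x + 2 * ω * (f0 x - f2 x))
    (hF0 : ∀ x : ℝ, F (x, 0) = ω * f2 x + ω * fm2 x - 2 * ω * f0 x)
    (hFm : ∀ x : ℝ, F (x, -2) = -2 * fm2' x + 2 * ω * (f0 x - fm2 x)) :
    ∫ p, F p ∂μhat = 0 := by
  have hc : (0:ℝ) < 2 + ω * L := by positivity
  have hcf2 : ContinuousOn f2 (Icc (0:ℝ) L) := fun x hx => (hf2 x hx).continuousWithinAt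
  have hcfm2 : ContinuousOn fm2 (Icc (0:ℝ) L) := fun x hx => (hfm2 x hx).continuousWithinAt
  -- integrability of the basic pieces
  have hi2 : IntegrableOn f2 (Icc (0:ℝ) L) := hcf2.integrableOn_Icc
  have him2 : IntegrableOn fm2 (Icc (0:ℝ) L) := hcfm2.integrableOn_Icc
  have hi0 : IntegrableOn f0 (Icc (0:ℝ) L) := hf0.integrableOn_Icc
  have hi2' : IntegrableOn f2' (Icc (0:ℝ) L) := hf2'.integrableOn_Icc
  have him2' : IntegrableOn fm2' (Icc (0:ℝ) L) := hfm2'.integrableOn_Icc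
  -- the three slice functions
  have hg2 : IntegrableOn (fun x => F (x, 2)) (Icc (0:ℝ) L) := by
    refine IntegrableOn.congr_fun ?_ (fun x _ => (hFp x).symm) measurableSet_Icc
    exact (hi2'.const_mul 2).add ((hi0.sub hi2).const_mul (2 * ω))
  have hg0 : IntegrableOn (fun x => F (x, 0)) (Icc (0:ℝ) L) := by
    refine IntegrableOn.congr_fun ?_ (fun x _ => (hF0 x).symm) measurableSet_Icc
    exact ((hi2.const_mul ω).add (him2.const_mul ω)).sub (hi0.const_mul (2 * ω))
  have hgm : IntegrableOn (fun x => F (x, -2)) (Icc (0:ℝ) L) := by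
    refine IntegrableOn.congr_fun ?_ (fun x _ => (hFm x).symm) measurableSet_Icc
    exact (him2'.const_mul (-2)).add ((hi0.sub him2).const_mul (2 * ω))
  -- values of the Lebesgue parts
  have l1 : IntegrableOn (fun x => 2 * f2' x) (Icc (0:ℝ) L) := hi2'.const_mul 2
  have l2 : IntegrableOn (fun x => 2 * ω * (f0 x - f2 x)) (Icc (0:ℝ) L) :=
    (hi0.sub hi2).const_mul (2 * ω)
  have l3 : IntegrableOn (fun x => ω * f2 x + ω * fm2 x) (Icc (0:ℝ) L) :=
    (hi2.const_mul ω).add (him2.const_mul ω)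
  have l4 : IntegrableOn (fun x => 2 * ω * f0 x) (Icc (0:ℝ) L) := hi0.const_mul (2 * ω)
  have l5 : IntegrableOn (fun x => -2 * fm2' x) (Icc (0:ℝ) L) := him2'.const_mul (-2)
  have l6 : IntegrableOn (fun x => 2 * ω * (f0 x - fm2 x)) (Icc (0:ℝ) L) :=
    (hi0.sub him2).const_mul (2 * ω)
  have hA : ∫ x in Icc (0:ℝ) L, F (x, 2) =
      2 * (f2 L - f2 0) + 2 * ω * ((∫ x in Icc (0:ℝ) L, f0 x) - ∫ x in Icc (0:ℝ) L, f2 x) := by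
    rw [setIntegral_congr_fun measurableSet_Icc (fun x _ => hFp x),
      integral_add l1 l2, integral_const_mul, integral_const_mul, integral_sub hi0 hi2,
      ftc_icc hL f2 f2' hf2 hf2']
  have hB : ∫ x in Icc (0:ℝ) L, F (x, 0) =
      ω * (∫ x in Icc (0:ℝ) L, f2 x) + ω * (∫ x in Icc (0:ℝ) L, fm2 x) -
        2 * ω * (∫ x in Icc (0:ℝ) L, f0 x) := by
    rw [setIntegral_congr_fun measurableSet_Icc (fun x _ => hF0 x),
      integral_sub l3 l4, integral_add (hi2.const_mul ω) (him2.const_mul ω),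
      integral_const_mul, integral_const_mul, integral_const_mul]
  have hC : ∫ x in Icc (0:ℝ) L, F (x, -2) =
      -2 * (fm2 L - fm2 0) + 2 * ω * ((∫ x in Icc (0:ℝ) L, f0 x) - ∫ x in Icc (0:ℝ) L, fm2 x) := by
    rw [setIntegral_congr_fun measurableSet_Icc (fun x _ => hFm x),
      integral_add l5 l6, integral_const_mul, integral_const_mul, integral_sub hi0 him2,
      ftc_icc hL fm2 fm2' hfm2 hfm2']
  have me2 := measurableEmbedding_prod_mk_right (β := ℝ) (2:ℝ)
  have me0 := measurableEmbedding_prod_mk_right (β := ℝ) (0:ℝ)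
  have mem := measurableEmbedding_prod_mk_right (β := ℝ) (-2:ℝ)
  rw [hμhat,
    integral_add_measure
      ((me2.integrable_map_iff.mpr (rtp_integrable _ hg2)).add_measure
        (me0.integrable_map_iff.mpr (rtp_integrable _ hg0)))
      (mem.integrable_map_iff.mpr (rtp_integrable _ hgm)),
    integral_add_measure (me2.integrable_map_iff.mpr (rtp_integrable _ hg2))
      (me0.integrable_map_iff.mpr (rtp_integrable _ hg0)),
    me2.integral_map, me0.integral_map, mem.integral_map,
    rtp_integral le_rfl (by positivity) (by positivity) _ hg2,
    rtp_integral (by positivity) (by positivity) (by positivity) _ hg0,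
    rtp_integral (by positivity) (by positivity) le_rfl _ hgm,
    hA, hB, hC, hFp, hFp, hF0, hF0, hFm, hFm, hNeumannL, hNeumann0]
  field_simp
  ring
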